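/- arXiv:1506.05044 — 2 statements merged into one kernel-verified Lean document; each statement's English description precedes it below -/
import Mathlib

section
/- The map Γ : D([0,T];ℝ²) → D([0,T];ℝ²) defined by Γ(f)(t) = f(t) − g_f(t)·e₁, where g_f(t) = sup_{0≤u≤t} (2β − (f₁(u)+f₂(u)))⁻ and e₁ = (1,0), is Lipschitz continuous with respect to the uniform norm: there is a constant C (one may take C = 1+√2) such that for all f, f̃ in D([0,T];ℝ²), sup_{t∈[0,T]} ‖Γ(f)(t) − Γ(f̃)(t)‖ ≤ C · sup_{t∈[0,T]} ‖f(t) − f̃(t)‖. -/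
/-!
Writing `Γ f - Γ f̃ = (f - f̃) - (g_f - g_f̃) • e₁`, it suffices to bound `|g_f - g_f̃|` by
`√2 ‖f - f̃‖_T`. The map `x ↦ (2β - (x₁ + x₂))⁻` is `√2`-Lipschitz (Cauchy–Schwarz), and a
supremum of a `c`-Lipschitz transform of `f` moves by at most `c` times the uniform distance.
The suprema are genuine (not the junk value `0` of an unbounded `⨆` in `ℝ`) because a càdlàg
function is bounded on `[0, T]`: its one-sided limits make it locally bounded, and `[0, T]` is
compact.
-/

noncomputable section

/-- Negative part of a real number: `x⁻ = max (-x) 0`. -/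
def negp (x : ℝ) : ℝ := max (-x) 0

/-- The first standard basis vector of `ℝ²`. -/
def e1 : EuclideanSpace ℝ (Fin 2) := EuclideanSpace.single 0 1

/-- `g_f(t) = sup_{0 ≤ u ≤ t} (2β − (f₁(u) + f₂(u)))⁻`. -/
def gmap (β : ℝ) (f : ℝ → EuclideanSpace ℝ (Fin 2)) (t : ℝ) : ℝ :=
  ⨆ u : Set.Icc (0 : ℝ) t, negp (2 * β - (f u 0 + f u 1))

/-- `Γ(f)(t) = f(t) − g_f(t)·e₁`. -/
def Gam (β : ℝ) (f : ℝ → EuclideanSpace ℝ (Fin 2)) (t : ℝ) : EuclideanSpace ℝ (Fin 2) :=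
  f t - gmap β f t • e1

/-- `f` is càdlàg on `[0, T]`: right-continuous on `[0,T)` and with left limits on `(0,T]`. -/
def IsCadlagOn {E : Type*} [TopologicalSpace E] (f : ℝ → E) (T : ℝ) : Prop :=
  (∀ t ∈ Set.Ico (0 : ℝ) T, ContinuousWithinAt f (Set.Ici t) t) ∧
  (∀ t ∈ Set.Ioc (0 : ℝ) T, ∃ l, Filter.Tendsto f (nhdsWithin t (Set.Iio t)) (nhds l))

open Bornology Filter Set Topology

lemma exists_mem_sup_isBounded_image {α E : Type*} [Bornology E] {l₁ l₂ : Filter α} {f : α → E}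
    (h₁ : ∃ s ∈ l₁, IsBounded (f '' s)) (h₂ : ∃ s ∈ l₂, IsBounded (f '' s)) :
    ∃ s ∈ l₁ ⊔ l₂, IsBounded (f '' s) := by
  obtain ⟨s₁, hs₁, hb₁⟩ := h₁
  obtain ⟨s₂, hs₂, hb₂⟩ := h₂
  exact ⟨s₁ ∪ s₂, union_mem_sup hs₁ hs₂, by rw [image_union]; exact hb₁.union hb₂⟩

section Cadlag

variable {E : Type*} [PseudoMetricSpace E] {f : ℝ → E} {T : ℝ}

lemma IsCadlagOn.exists_mem_nhdsWithin_isBounded_image (hf : IsCadlagOn f T) {t : ℝ}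
    (ht : t ∈ Icc 0 T) : ∃ s ∈ 𝓝[Icc 0 T] t, IsBounded (f '' s) := by
  rw [← inter_univ (Icc 0 T), ← Iio_union_Ici (a := t), inter_union_distrib_left,
    nhdsWithin_union]
  refine exists_mem_sup_isBounded_image ?_ ?_
  · rcases ht.1.eq_or_lt with rfl | ht₀
    · refine ⟨_, self_mem_nhdsWithin, (Subsingleton.image ?_ f).finite.isBounded⟩
      exact fun x hx y hy => absurd hx.1.1 (not_le.2 hx.2)
    · obtain ⟨l, hl⟩ := hf.2 t ⟨ht₀, ht.2⟩
      obtain ⟨s, hs, hb⟩ := Metric.exists_isBounded_image_of_tendsto hl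
      exact ⟨s, nhdsWithin_mono _ inter_subset_right hs, hb⟩
  · rcases ht.2.eq_or_lt with rfl | htT
    · refine ⟨_, self_mem_nhdsWithin, (Subsingleton.image ?_ f).finite.isBounded⟩
      exact fun x hx y hy => (hx.1.2.antisymm hx.2).trans (hy.1.2.antisymm hy.2).symm
    · obtain ⟨s, hs, hb⟩ := Metric.exists_isBounded_image_of_tendsto (hf.1 t ⟨ht.1, htT⟩)
      exact ⟨s, nhdsWithin_mono _ inter_subset_right hs, hb⟩

lemma IsCadlagOn.isBounded_image (hf : IsCadlagOn f T) : IsBounded (f '' Icc 0 T) :=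
  isCompact_Icc.induction_on (p := fun s => IsBounded (f '' s)) (by simp)
    (fun _ _ hst hb => hb.subset (image_mono hst))
    (fun _ _ hs ht => by rw [image_union]; exact hs.union ht)
    fun _ ht => hf.exists_mem_nhdsWithin_isBounded_image ht

end Cadlag

lemma abs_ciSup_sub_ciSup_le {ι : Type*} [Nonempty ι] {F G : ι → ℝ} {c : ℝ}
    (hF : BddAbove (range F)) (hG : BddAbove (range G)) (h : ∀ i, |F i - G i| ≤ c) :
    |(⨆ i, F i) - ⨆ i, G i| ≤ c := by
  refine abs_sub_le_iff.2 ⟨sub_le_iff_le_add'.2 ?_, sub_le_iff_le_add'.2 ?_⟩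
  · exact ciSup_le fun i => by
      linarith [(abs_sub_le_iff.1 (h i)).1, le_ciSup hG i]
  · exact ciSup_le fun i => by
      linarith [(abs_sub_le_iff.1 (h i)).2, le_ciSup hF i]

lemma abs_negp_sub_negp_le (a b : ℝ) : |negp a - negp b| ≤ |a - b| :=
  (abs_max_sub_max_le_abs (-a) (-b) 0).trans_eq (by rw [neg_sub_neg, abs_sub_comm])

lemma abs_add_le_sqrt_two_mul_norm (x : EuclideanSpace ℝ (Fin 2)) : |x 0 + x 1| ≤ √2 * ‖x‖ := by
  refine abs_le_of_sq_le_sq ?_ (by positivity)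
  rw [mul_pow, Real.sq_sqrt zero_le_two, EuclideanSpace.real_norm_sq_eq, Fin.sum_univ_two]
  nlinarith [sq_nonneg (x 0 - x 1)]

-- Chosen so that `gmap β f t` is definitionally `⨆ u : Icc 0 t, excess β (f u)`.
def excess (β : ℝ) (x : EuclideanSpace ℝ (Fin 2)) : ℝ := negp (2 * β - (x 0 + x 1))

lemma lipschitzWith_excess (β : ℝ) : LipschitzWith (NNReal.sqrt 2) (excess β) :=
  LipschitzWith.of_dist_le_mul fun x y => by
    rw [Real.dist_eq, dist_comm, dist_eq_norm, Real.coe_sqrt, NNReal.coe_ofNat]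
    calc |excess β x - excess β y|
        ≤ |(2 * β - (x 0 + x 1)) - (2 * β - (y 0 + y 1))| := abs_negp_sub_negp_le _ _
      _ = |(y - x) 0 + (y - x) 1| := by simp only [PiLp.sub_apply]; ring_nf
      _ ≤ √2 * ‖y - x‖ := abs_add_le_sqrt_two_mul_norm _

lemma abs_gmap_sub_gmap_le (β : ℝ) {f g : ℝ → EuclideanSpace ℝ (Fin 2)} {t K : ℝ} (ht : 0 ≤ t)
    (hf : IsBounded (f '' Icc 0 t)) (hg : IsBounded (g '' Icc 0 t))
    (hK : ∀ u ∈ Icc 0 t, ‖f u - g u‖ ≤ K) :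
    |gmap β f t - gmap β g t| ≤ √2 * K := by
  have : Nonempty (Icc 0 t) := ⟨⟨0, left_mem_Icc.2 ht⟩⟩
  have hbdd {h : ℝ → EuclideanSpace ℝ (Fin 2)} (hh : IsBounded (h '' Icc 0 t)) :
      BddAbove (range fun u : Icc 0 t => excess β (h u)) := by
    have := ((lipschitzWith_excess β).isBounded_image hh).bddAbove
    rwa [← image_comp, image_eq_range] at this
  refine abs_ciSup_sub_ciSup_le (hbdd hf) (hbdd hg) fun u => ?_
  calc |excess β (f u) - excess β (g u)| ≤ √2 * ‖f u - g u‖ := by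
        simpa [dist_eq_norm] using (lipschitzWith_excess β).dist_le_mul (f u) (g u)
    _ ≤ √2 * K := by gcongr; exact hK u u.2

lemma norm_Gam_sub_Gam_le (β : ℝ) (f g : ℝ → EuclideanSpace ℝ (Fin 2)) (t : ℝ) :
    ‖Gam β f t - Gam β g t‖ ≤ ‖f t - g t‖ + |gmap β f t - gmap β g t| := by
  have hdecomp : Gam β f t - Gam β g t = (f t - g t) - (gmap β f t - gmap β g t) • e1 := by
    simp only [Gam, sub_smul]
    abel
  rw [hdecomp, ← Real.norm_eq_abs, ← mul_one ‖gmap β f t - gmap β g t‖]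
  convert norm_sub_le _ _ using 2
  rw [norm_smul, e1, PiLp.norm_single, norm_one]

theorem gamma_lipschitz_general (β T : ℝ)
    (f ftil : ℝ → EuclideanSpace ℝ (Fin 2))
    (hf : IsCadlagOn f T) (hftil : IsCadlagOn ftil T) :
    (⨆ t : Set.Icc (0 : ℝ) T, ‖Gam β f t - Gam β ftil t‖) ≤
      (1 + Real.sqrt 2) * ⨆ t : Set.Icc (0 : ℝ) T, ‖f t - ftil t‖ := by
  obtain ⟨Cf, hCf⟩ := isBounded_iff_forall_norm_le.1 hf.isBounded_image
  obtain ⟨Cg, hCg⟩ := isBounded_iff_forall_norm_le.1 hftil.isBounded_image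
  set K := ⨆ t : Icc (0 : ℝ) T, ‖f t - ftil t‖
  have hK (t : ℝ) (ht : t ∈ Icc 0 T) : ‖f t - ftil t‖ ≤ K := by
    refine le_ciSup (f := fun t : Icc 0 T => ‖f t - ftil t‖) ⟨Cf + Cg, ?_⟩ ⟨t, ht⟩
    rintro _ ⟨u, rfl⟩
    exact (norm_sub_le _ _).trans
      (add_le_add (hCf _ (mem_image_of_mem f u.2)) (hCg _ (mem_image_of_mem ftil u.2)))
  refine Real.iSup_le (fun t => ?_)
    (mul_nonneg (by positivity) (Real.iSup_nonneg fun _ => norm_nonneg _))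
  have hsub : Icc 0 (t : ℝ) ⊆ Icc 0 T := Icc_subset_Icc_right t.2.2
  calc ‖Gam β f t - Gam β ftil t‖ ≤ ‖f t - ftil t‖ + |gmap β f t - gmap β ftil t| :=
        norm_Gam_sub_Gam_le β f ftil t
    _ ≤ K + √2 * K := add_le_add (hK t t.2) <| abs_gmap_sub_gmap_le β t.2.1
        (hf.isBounded_image.subset (image_mono hsub))
        (hftil.isBounded_image.subset (image_mono hsub)) fun u hu => hK u (hsub hu)
    _ = (1 + √2) * K := by ring

/-- The map `Γ` is Lipschitz for the uniform norm on `D([0,T];ℝ²)`, with constant `1 + √2`. -/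
theorem gamma_lipschitz (β T : ℝ) (hβ : 0 < β) (hT : 0 < T)
    (f ftil : ℝ → EuclideanSpace ℝ (Fin 2))
    (hf : IsCadlagOn f T) (hftil : IsCadlagOn ftil T) :
    (⨆ t : Set.Icc (0 : ℝ) T, ‖Gam β f t - Gam β ftil t‖) ≤
      (1 + Real.sqrt 2) * ⨆ t : Set.Icc (0 : ℝ) T, ‖f t - ftil t‖ :=
  gamma_lipschitz_general β T f ftil hf hftil
end
end

section
/- Fix n ∈ ℕ, a ∈ (0,1/2), m = m_n = ⌊n^a⌋, τ = m/n. Define E^n : [0,∞) → ℤ≥0 on [0,τ] by E^n(t) = 0 for t ∈ [0, τ/2), E^n(t) = ⌊2n(t − τ/2)+2⌋ for t ∈ [τ/2, τ), E^n(τ) = m, and extend periodically by E^n(t + jτ) = E^n(jτ) + E^n(t) for t ∈ (0, τ], j ∈ ℕ. Then sup_{t∈[0,T]} |E^n(t) − n t| ≤ m + 3 for every T > 0 that is a multiple of τ; consequently n^{−1/2} sup_{t∈[0,T]} |E^n(t) − n t| → 0 as n → ∞ for every fixed T, i.e., the scaled processes n^{−1/2}(E^n(t) − n t) converge to 0 uniformly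 on compacts. -/
/-!
Within one period the pattern stays within `m + 3` of the line `t ↦ n t`: it is `0` on the
first half and tracks `2 n (t − τ/2)` up to rounding on the second. Since exactly `m = n τ`
arrivals occur per period, the deviation `Eⁿ(t) − n t` vanishes at every `j τ` and repeats
from period to period, so the one-period bound holds on all of `[0, ∞)`. As `m ≤ n^a` with
`a < 1/2`, dividing by `√n` sends it to `0`.
-/

open Filter Topology

section PeriodicDeviation

variable {f : ℝ → ℤ} {c τ : ℝ}

theorem deviation_add_nat_mul
    (hper : ∀ j : ℕ, ∀ t, 0 < t → t ≤ τ → f (t + j * τ) = f (j * τ) + f t)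
    (j : ℕ) {t : ℝ} (ht : 0 < t) (htτ : t ≤ τ) :
    (f (t + j * τ) : ℝ) - c * (t + j * τ) = ((f (j * τ) : ℝ) - c * (j * τ)) + (f t - c * t) := by
  rw [hper j t ht htτ]
  push_cast
  ring

theorem deviation_nat_mul_eq_zero (hτ : 0 < τ) (h0 : f 0 = 0) (hfτ : (f τ : ℝ) = c * τ)
    (hper : ∀ j : ℕ, ∀ t, 0 < t → t ≤ τ → f (t + j * τ) = f (j * τ) + f t) :
    ∀ j : ℕ, (f (j * τ) : ℝ) - c * (j * τ) = 0
  | 0 => by simp [h0]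
  | j + 1 => by
    have hsplit := deviation_add_nat_mul (c := c) hper j hτ le_rfl
    rw [deviation_nat_mul_eq_zero hτ h0 hfτ hper j, hfτ, sub_self, add_zero] at hsplit
    rw [← hsplit]
    push_cast
    ring_nf

theorem abs_deviation_le_of_le_nat_mul (hτ : 0 < τ) (h0 : f 0 = 0) (hfτ : (f τ : ℝ) = c * τ)
    (hper : ∀ j : ℕ, ∀ t, 0 < t → t ≤ τ → f (t + j * τ) = f (j * τ) + f t) {B : ℝ}
    (hB : ∀ t, 0 ≤ t → t ≤ τ → |(f t : ℝ) - c * t| ≤ B) :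
    ∀ k : ℕ, ∀ t, 0 ≤ t → t ≤ k * τ → |(f t : ℝ) - c * t| ≤ B
  | 0, t, ht, htk => hB t ht (by simp at htk; linarith)
  | k + 1, t, ht, htk => by
    rcases le_or_gt t (k * τ) with hle | hlt
    · exact abs_deviation_le_of_le_nat_mul hτ h0 hfτ hper hB k t ht hle
    · have hshift := deviation_add_nat_mul (c := c) hper k (t := t - k * τ)
        (by linarith) (by push_cast at htk; linarith)
      rw [sub_add_cancel, deviation_nat_mul_eq_zero hτ h0 hfτ hper k, zero_add] at hshift
      rw [hshift]
      exact hB _ (by linarith) (by push_cast at htk; linarith)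

theorem abs_deviation_le (hτ : 0 < τ) (h0 : f 0 = 0) (hfτ : (f τ : ℝ) = c * τ)
    (hper : ∀ j : ℕ, ∀ t, 0 < t → t ≤ τ → f (t + j * τ) = f (j * τ) + f t) {B : ℝ}
    (hB : ∀ t, 0 ≤ t → t ≤ τ → |(f t : ℝ) - c * t| ≤ B) {t : ℝ} (ht : 0 ≤ t) :
    |(f t : ℝ) - c * t| ≤ B := by
  obtain ⟨k, hk⟩ := exists_nat_ge (t / τ)
  exact abs_deviation_le_of_le_nat_mul hτ h0 hfτ hper hB k t ht ((div_le_iff₀ hτ).mp hk)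

end PeriodicDeviation

theorem abs_arrivals_sub_le_on_period {f : ℝ → ℤ} {n τ : ℝ} (hn : 0 ≤ n)
    (h0 : ∀ t, 0 ≤ t → t < τ / 2 → f t = 0)
    (h1 : ∀ t, τ / 2 ≤ t → t < τ → f t = ⌊2 * n * (t - τ / 2) + 2⌋)
    (hfτ : (f τ : ℝ) = n * τ) {t : ℝ} (ht : 0 ≤ t) (htτ : t ≤ τ) :
    |(f t : ℝ) - n * t| ≤ n * τ + 3 := by
  have hnt : n * t ≤ n * τ := mul_le_mul_of_nonneg_left htτ hn
  have hnt0 : 0 ≤ n * t := mul_nonneg hn ht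
  rcases lt_or_ge t (τ / 2) with hfirst | hsecond
  · rw [h0 t ht hfirst, abs_le]
    constructor <;> push_cast <;> linarith
  rcases htτ.lt_or_eq with hlt | rfl
  · have hmid : n * (τ / 2) ≤ n * t := mul_le_mul_of_nonneg_left hsecond hn
    have hfloor := Int.floor_le (2 * n * (t - τ / 2) + 2)
    have hfloor' := Int.lt_floor_add_one (2 * n * (t - τ / 2) + 2)
    rw [h1 t hsecond hlt, abs_le]
    constructor <;> nlinarith
  · rw [hfτ, sub_self, abs_zero]
    linarith

theorem abs_periodic_arrivals_sub_le {f : ℝ → ℤ} {n m : ℕ} {τ : ℝ} (hn : 0 < n) (hm : 0 < m)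
    (hτ : τ = (m : ℝ) / n)
    (h0 : ∀ t, 0 ≤ t → t < τ / 2 → f t = 0)
    (h1 : ∀ t, τ / 2 ≤ t → t < τ → f t = ⌊2 * (n : ℝ) * (t - τ / 2) + 2⌋)
    (h2 : f τ = m)
    (hper : ∀ j : ℕ, ∀ t, 0 < t → t ≤ τ → f (t + j * τ) = f (j * τ) + f t)
    {t : ℝ} (ht : 0 ≤ t) :
    |(f t : ℝ) - n * t| ≤ m + 3 := by
  have hτpos : 0 < τ := by rw [hτ]; positivity
  have hnτ : (n : ℝ) * τ = m := by rw [hτ]; field_simp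
  have hfτ : (f τ : ℝ) = n * τ := by rw [h2, hnτ]; rfl
  refine abs_deviation_le hτpos (h0 0 le_rfl (by linarith)) hfτ hper (fun s hs hsτ => ?_) ht
  rw [← hnτ]
  exact abs_arrivals_sub_le_on_period (Nat.cast_nonneg n) h0 h1 hfτ hs hsτ

theorem tendsto_rpow_add_const_div_sqrt {a : ℝ} (ha : a < 1 / 2) (C : ℝ) :
    Tendsto (fun x : ℝ => (x ^ a + C) / √x) atTop (𝓝 0) := by
  have hpow : Tendsto (fun x : ℝ => x ^ (a - 1 / 2) + C * x ^ (-(1 / 2 : ℝ))) atTop (𝓝 0) := by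
    have h₁ := tendsto_rpow_neg_atTop (by linarith : (0 : ℝ) < 1 / 2 - a)
    have h₂ := (tendsto_rpow_neg_atTop (by norm_num : (0 : ℝ) < 1 / 2)).const_mul C
    rw [neg_sub] at h₁
    simpa using h₁.add h₂
  refine hpow.congr' ?_
  filter_upwards [eventually_gt_atTop 0] with x hx
  rw [Real.sqrt_eq_rpow, add_div, Real.rpow_sub hx, Real.rpow_neg hx.le, div_eq_mul_inv C]

/-- For the periodic class-2 arrival pattern `Eⁿ` with `m_n = ⌊n^a⌋` arrivals per period
`τ_n = m_n/n`: the deviation from the line `t ↦ n t` is at most `m_n + 3` on every horizon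
that is a multiple of the period, and consequently the diffusion-scaled processes
`n^{-1/2}(Eⁿ(t) − n t)` converge to `0` uniformly on compacts. -/
theorem periodic_arrival_lln (a : ℝ) (ha : 0 < a) (ha' : a < 1 / 2)
    (E : ℕ → ℝ → ℤ) (m : ℕ → ℕ) (τ : ℕ → ℝ)
    (hm : ∀ n, m n = ⌊(n : ℝ) ^ a⌋₊)
    (hτ : ∀ n, τ n = (m n : ℝ) / n)
    (h0 : ∀ n, 0 < n → ∀ t, 0 ≤ t → t < τ n / 2 → E n t = 0)
    (h1 : ∀ n, 0 < n → ∀ t, τ n / 2 ≤ t → t < τ n →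
      E n t = ⌊2 * (n : ℝ) * (t - τ n / 2) + 2⌋)
    (h2 : ∀ n, 0 < n → E n (τ n) = m n)
    (hper : ∀ n, 0 < n → ∀ j : ℕ, ∀ t, 0 < t → t ≤ τ n →
      E n (t + j * τ n) = E n (j * τ n) + E n t) :
    (∀ n, 0 < n → ∀ j : ℕ, ∀ t, 0 ≤ t → t ≤ j * τ n →
      |(E n t : ℝ) - n * t| ≤ m n + 3) ∧
    (∀ T : ℝ, 0 < T →
      Tendsto (fun n : ℕ =>
          (Real.sqrt n)⁻¹ * ⨆ t : Set.Icc (0 : ℝ) T, |(E n t : ℝ) - n * t|)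
        atTop (nhds 0)) := by
  have key : ∀ n, 0 < n → ∀ t, 0 ≤ t → |(E n t : ℝ) - n * t| ≤ m n + 3 := by
    intro n hn t ht
    have hm1 : 0 < m n := by
      rw [hm, Nat.floor_pos]
      exact Real.one_le_rpow (Nat.one_le_cast.mpr hn) ha.le
    exact abs_periodic_arrivals_sub_le hn hm1 (hτ n) (h0 n hn) (h1 n hn) (h2 n hn) (hper n hn) ht
  refine ⟨fun n hn _ t ht _ => key n hn t ht, fun T _ => ?_⟩
  have hbound := (tendsto_rpow_add_const_div_sqrt ha' 3).comp tendsto_natCast_atTop_atTop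
  refine tendsto_of_tendsto_of_tendsto_of_le_of_le' tendsto_const_nhds hbound
    (Eventually.of_forall fun n => mul_nonneg (by positivity)
      (Real.iSup_nonneg fun _ => abs_nonneg _)) ?_
  filter_upwards [eventually_gt_atTop 0] with n hn
  rw [Function.comp_apply, div_eq_inv_mul]
  gcongr
  refine Real.iSup_le (fun t => (key n hn t t.2.1).trans ?_) (by positivity)
  rw [hm]
  gcongr
  exact Nat.floor_le (by positivity)
end
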